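/- Let G : (0,∞)×ℝ²×ℝ² → [0,∞) be a kernel with G(t,x,·) a probability density for each (t,x), satisfying G(t,x,y) ≤ C/t and ∫ G(t,x,y)γ(x)dx ≤ e^{Ct}γ(y) for a positive weight γ. Let ψ ∈ L²(ℝ², γdx) and p ∈ (1,∞). Then ∫_{ℝ²} (∫_{ℝ²} |G(t,x,y)ψ(y)|^{2p/(p+1)} dy)^{(p+1)/p} γ(x) dx ≤ C' t^{−(p−1)/p} e^{Ct} ∫ |ψ(y)|² γ(y) dy for a constant C' depending only on C and p. -/

import Mathlib

open MeasureTheory ENNReal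

/-- Jensen-type inequality: if `g` is a probability density and `0 < c < 1`, then
`∫ g f^c ≤ (∫ g f)^c`. Proved via Hölder. -/
lemma jensen_aux {α : Type*} [MeasurableSpace α] (μ : Measure α)
    (g f : α → ℝ≥0∞) (hg : AEMeasurable g μ) (hf : AEMeasurable f μ)
    (hg1 : ∫⁻ y, g y ∂μ = 1) {c : ℝ} (hc0 : 0 < c) (hc1 : c < 1) :
    ∫⁻ y, g y * f y ^ c ∂μ ≤ (∫⁻ y, g y * f y ∂μ) ^ c := by
  have hc1' : (0:ℝ) < 1 - c := by linarith
  have hpq : (1/c).HolderConjugate (1/(1-c)) := by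
    constructor
    · rw [one_div, one_div, inv_inv, inv_inv, inv_one]; ring
    · exact one_div_pos.mpr hc0
    · exact one_div_pos.mpr hc1'
  have hF : AEMeasurable (fun y => (g y * f y) ^ c) μ := (hg.mul hf).pow_const _
  have hH : AEMeasurable (fun y => g y ^ (1 - c)) μ := hg.pow_const _
  have key := ENNReal.lintegral_mul_le_Lp_mul_Lq μ hpq hF hH
  have h1 : ∀ y, ((fun y => (g y * f y) ^ c) * fun y => g y ^ (1 - c)) y
      = g y * f y ^ c := by
    intro y
    simp only [Pi.mul_apply]
    rw [ENNReal.mul_rpow_of_nonneg _ _ hc0.le, mul_comm (g y ^ c), mul_assoc,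
      ← ENNReal.rpow_add_of_nonneg _ _ hc0.le hc1'.le]
    rw [add_sub_cancel, ENNReal.rpow_one, mul_comm]
  calc ∫⁻ y, g y * f y ^ c ∂μ
      = ∫⁻ y, ((fun y => (g y * f y) ^ c) * fun y => g y ^ (1 - c)) y ∂μ := by
        simp_rw [h1]
    _ ≤ (∫⁻ y, ((g y * f y) ^ c) ^ (1/c) ∂μ) ^ (1/(1/c)) *
        (∫⁻ y, (g y ^ (1 - c)) ^ (1/(1-c)) ∂μ) ^ (1/(1/(1-c))) := key
    _ = (∫⁻ y, g y * f y ∂μ) ^ c := by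
        have e1 : ∀ x : ℝ≥0∞, (x ^ c) ^ (1/c) = x := by
          intro x
          rw [← ENNReal.rpow_mul, mul_one_div_cancel hc0.ne', ENNReal.rpow_one]
        have e2 : ∀ x : ℝ≥0∞, (x ^ (1-c)) ^ (1/(1-c)) = x := by
          intro x
          rw [← ENNReal.rpow_mul, mul_one_div_cancel hc1'.ne', ENNReal.rpow_one]
        simp_rw [e1, e2, hg1, one_div_one_div, ENNReal.one_rpow, mul_one]

/-- core estimate of Lemma 3.2. If `G(t,x,·)` is a probability density,
`G(t,x,y) ≤ C/t`, and `∫ G(t,x,y)γ(x)dx ≤ e^{Ct}γ(y)`, then for `ψ ∈ L²(γ dx)` and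
`p ∈ (1,∞)`,
`∫ (∫ |G(t,x,y)ψ(y)|^{2p/(p+1)} dy)^{(p+1)/p} γ(x) dx
   ≤ C' t^{−(p−1)/p} e^{Ct} ∫ |ψ|² γ` with `C'` depending only on `C` and `p`. -/
theorem stmt14
    (C p : ℝ) (hC : 0 < C) (hp : 1 < p) :
    ∃ C' : ℝ, 0 < C' ∧
      ∀ (G : ℝ → EuclideanSpace ℝ (Fin 2) → EuclideanSpace ℝ (Fin 2) → ℝ)
        (γ ψ : EuclideanSpace ℝ (Fin 2) → ℝ) (t : ℝ), 0 < t →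
        (∀ s x y, 0 ≤ G s x y) →
        Measurable (fun q : ℝ × EuclideanSpace ℝ (Fin 2) × EuclideanSpace ℝ (Fin 2) =>
          G q.1 q.2.1 q.2.2) →
        (∀ x, ∫⁻ y, ENNReal.ofReal (G t x y) = 1) →
        (∀ x y, G t x y ≤ C / t) →
        (∀ y, ∫⁻ x, ENNReal.ofReal (G t x y) * ENNReal.ofReal (γ x) ≤
          ENNReal.ofReal (Real.exp (C * t) * γ y)) →
        Measurable γ → (∀ x, 0 < γ x) → Measurable ψ →
        (∫⁻ x, ENNReal.ofReal (ψ x ^ 2) * ENNReal.ofReal (γ x) < ⊤) →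
        ∫⁻ x, (∫⁻ y, (ENNReal.ofReal (|G t x y * ψ y|)) ^ (2 * p / (p + 1)))
              ^ ((p + 1) / p) * ENNReal.ofReal (γ x) ≤
          ENNReal.ofReal C' * ENNReal.ofReal t ^ (-(p - 1) / p) *
            ENNReal.ofReal (Real.exp (C * t)) *
            ∫⁻ y, ENNReal.ofReal (ψ y ^ 2) * ENNReal.ofReal (γ y) := by
  have hp0 : (0:ℝ) < p := by linarith
  have hp1 : (0:ℝ) < p + 1 := by linarith
  refine ⟨C ^ ((p - 1) / p), Real.rpow_pos_of_pos hC _, ?_⟩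
  intro G γ ψ t ht hGnn hGm hprob hbdd hwt hγm hγpos hψm hψint
  set a : ℝ := 2 * p / (p + 1) with ha_def
  set c : ℝ := p / (p + 1) with hc_def
  set qq : ℝ := (p + 1) / p with hq_def
  have hc0 : 0 < c := div_pos hp0 hp1
  have hc1 : c < 1 := by rw [div_lt_one hp1]; linarith
  have ha1 : 0 ≤ a - 1 := by
    rw [sub_nonneg, ha_def, le_div_iff₀ hp1]; linarith
  have hq0 : (0:ℝ) ≤ qq := by positivity
  -- measurability
  have hGt : Measurable (fun q : EuclideanSpace ℝ (Fin 2) × EuclideanSpace ℝ (Fin 2)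
      => G t q.1 q.2) := hGm.comp (measurable_const.prodMk measurable_id)
  set g : EuclideanSpace ℝ (Fin 2) → EuclideanSpace ℝ (Fin 2) → ℝ≥0∞ :=
    fun x y => ENNReal.ofReal (G t x y) with hg_def
  set f : EuclideanSpace ℝ (Fin 2) → ℝ≥0∞ :=
    fun y => ENNReal.ofReal (ψ y ^ 2) with hf_def
  have hgx : ∀ x, Measurable (g x) := fun x =>
    (hGt.comp (measurable_const.prodMk measurable_id)).ennreal_ofReal
  have hfm : Measurable f := (hψm.pow_const 2).ennreal_ofReal
  set K : ℝ≥0∞ := ENNReal.ofReal (C / t) ^ (a - 1) with hK_def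
  have hKne : K ≠ ⊤ := ENNReal.rpow_ne_top_of_nonneg ha1 ENNReal.ofReal_ne_top
  -- pointwise identity for the inner integrand
  have hpt : ∀ x y, (ENNReal.ofReal (|G t x y * ψ y|)) ^ a
      = g x y ^ (a - 1) * (g x y * f y ^ c) := by
    intro x y
    have h1 : |G t x y * ψ y| = G t x y * |ψ y| := by
      rw [abs_mul, abs_of_nonneg (hGnn t x y)]
    rw [h1, ENNReal.ofReal_mul (hGnn t x y)]
    rw [ENNReal.mul_rpow_of_nonneg _ _ (by positivity : (0:ℝ) ≤ a)]
    have h2 : g x y ^ a = g x y ^ (a - 1) * g x y := by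
      nth_rewrite 1 [show a = (a - 1) + 1 by ring]
      rw [ENNReal.rpow_add_of_nonneg _ _ ha1 zero_le_one, ENNReal.rpow_one]
    have h3 : (ENNReal.ofReal |ψ y|) ^ a = f y ^ c := by
      have : a = 2 * c := by rw [ha_def, hc_def]; ring
      rw [this, ENNReal.rpow_mul]
      congr 1
      rw [show ((2:ℝ)) = ((2:ℕ):ℝ) by norm_num, ENNReal.rpow_natCast,
        ← ENNReal.ofReal_pow (abs_nonneg _), sq_abs]
    rw [h2, h3, mul_assoc]
  -- inner estimate
  have hinner : ∀ x, (∫⁻ y, (ENNReal.ofReal (|G t x y * ψ y|)) ^ a)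
      ≤ K * (∫⁻ y, g x y * f y) ^ c := by
    intro x
    have step1 : (∫⁻ y, (ENNReal.ofReal (|G t x y * ψ y|)) ^ a)
        ≤ ∫⁻ y, K * (g x y * f y ^ c) := by
      apply lintegral_mono
      intro y
      dsimp only
      rw [hpt x y]
      gcongr
      exact ENNReal.rpow_le_rpow (ENNReal.ofReal_le_ofReal (hbdd x y)) ha1
    rw [lintegral_const_mul' _ _ hKne] at step1
    refine step1.trans ?_
    gcongr
    exact jensen_aux volume (g x) f (hgx x).aemeasurable hfm.aemeasurable
      (hprob x) hc0 hc1
  -- raise to power qq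
  have houter : ∀ x, (∫⁻ y, (ENNReal.ofReal (|G t x y * ψ y|)) ^ a) ^ qq
      ≤ K ^ qq * (∫⁻ y, g x y * f y) := by
    intro x
    calc (∫⁻ y, (ENNReal.ofReal (|G t x y * ψ y|)) ^ a) ^ qq
        ≤ (K * (∫⁻ y, g x y * f y) ^ c) ^ qq :=
          ENNReal.rpow_le_rpow (hinner x) hq0
      _ = K ^ qq * ((∫⁻ y, g x y * f y) ^ c) ^ qq :=
          ENNReal.mul_rpow_of_nonneg _ _ hq0
      _ = K ^ qq * (∫⁻ y, g x y * f y) := by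
          congr 1
          rw [← ENNReal.rpow_mul,
            show c * qq = 1 by rw [hc_def, hq_def]; field_simp, ENNReal.rpow_one]
  -- the constant K ^ qq
  have hKq : K ^ qq = ENNReal.ofReal (C ^ ((p-1)/p)) *
      ENNReal.ofReal t ^ (-(p - 1) / p) := by
    rw [hK_def, ← ENNReal.rpow_mul]
    have he : (a - 1) * qq = (p - 1) / p := by
      rw [ha_def, hq_def]; field_simp; ring
    rw [he, ENNReal.ofReal_div_of_pos ht, div_eq_mul_inv,
      ENNReal.mul_rpow_of_nonneg _ _ (div_nonneg (by linarith) hp0.le),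
      ENNReal.inv_rpow, ← ENNReal.rpow_neg,
      ← ENNReal.ofReal_rpow_of_pos hC, neg_div]
  -- integrate in x
  have hswap : ∫⁻ x, (∫⁻ y, g x y * f y) * ENNReal.ofReal (γ x)
      = ∫⁻ y, f y * ∫⁻ x, g x y * ENNReal.ofReal (γ x) := by
    have hmeas : AEMeasurable (Function.uncurry
        (fun x y => g x y * f y * ENNReal.ofReal (γ x)))
        ((volume : Measure (EuclideanSpace ℝ (Fin 2))).prod volume) := by
      apply Measurable.aemeasurable
      apply Measurable.mul (f := fun q : EuclideanSpace ℝ (Fin 2) × EuclideanSpace ℝ (Fin 2) => g q.1 q.2 * f q.2)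
        (g := fun q : EuclideanSpace ℝ (Fin 2) × EuclideanSpace ℝ (Fin 2) => ENNReal.ofReal (γ q.1))
      · exact (hGt.ennreal_ofReal).mul (hfm.comp measurable_snd)
      · exact (hγm.comp measurable_fst).ennreal_ofReal
    calc ∫⁻ x, (∫⁻ y, g x y * f y) * ENNReal.ofReal (γ x)
        = ∫⁻ x, ∫⁻ y, g x y * f y * ENNReal.ofReal (γ x) := by
          congr 1; ext x
          rw [lintegral_mul_const' _ _ ENNReal.ofReal_ne_top]
      _ = ∫⁻ y, ∫⁻ x, g x y * f y * ENNReal.ofReal (γ x) :=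
          lintegral_lintegral_swap hmeas
      _ = ∫⁻ y, f y * ∫⁻ x, g x y * ENNReal.ofReal (γ x) := by
          congr 1; ext y
          rw [← lintegral_const_mul' _ _ ENNReal.ofReal_ne_top]
          congr 1; ext x; ring
  calc ∫⁻ x, (∫⁻ y, (ENNReal.ofReal (|G t x y * ψ y|)) ^ a) ^ qq *
        ENNReal.ofReal (γ x)
      ≤ ∫⁻ x, K ^ qq * ((∫⁻ y, g x y * f y) * ENNReal.ofReal (γ x)) := by
        apply lintegral_mono
        intro x
        dsimp only
        rw [← mul_assoc]
        exact mul_le_mul_left (houter x) _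
    _ = K ^ qq * ∫⁻ x, (∫⁻ y, g x y * f y) * ENNReal.ofReal (γ x) :=
        lintegral_const_mul' _ _ (ENNReal.rpow_ne_top_of_nonneg hq0 hKne)
    _ = K ^ qq * ∫⁻ y, f y * ∫⁻ x, g x y * ENNReal.ofReal (γ x) := by rw [hswap]
    _ ≤ K ^ qq * ∫⁻ y, f y * ENNReal.ofReal (Real.exp (C * t) * γ y) := by
        gcongr with y
        exact hwt y
    _ = K ^ qq * (ENNReal.ofReal (Real.exp (C * t)) *
        ∫⁻ y, f y * ENNReal.ofReal (γ y)) := by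
        congr 1
        rw [← lintegral_const_mul' _ _ ENNReal.ofReal_ne_top]
        congr 1; ext y
        rw [ENNReal.ofReal_mul (Real.exp_nonneg _)]; ring
    _ = ENNReal.ofReal (C ^ ((p-1)/p)) * ENNReal.ofReal t ^ (-(p - 1) / p) *
        ENNReal.ofReal (Real.exp (C * t)) *
        ∫⁻ y, ENNReal.ofReal (ψ y ^ 2) * ENNReal.ofReal (γ y) := by
        rw [hKq]; ring
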